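/- Let $0 \le \lambda_1 \le \lambda_2 \le \cdots \le \lambda_{2p} \le 1$ be the sorted merged list of endpoints $\{\lambda_j^0, \lambda_j^1\}_{j=1}^p$ of $p$ closed intervals $I_j = [\lambda_j^0, \lambda_j^1] \subseteq [0,1]$. For an index $\ell \in \{1, \ldots, 2p-1\}$, the subsegment $[\lambda_\ell, \lambda_{\ell+1}]$ is contained in $\bigcup_{j=1}^p I_j$ if and only if there exists $j \in \{1,\ldots,p\}$ such that $\lambda_j^0 \le \lambda_\ell$ and $\lambda_{\ell+1} \le \lambda_j^1$. -/

import Mathlib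

/-! Consecutive values `a ≤ b` of the sorted list of endpoints enclose no endpoint strictly
between them. Hence if `[a, b]` is covered, the interval containing an interior point of
`[a, b]` starts at or before `a` and ends at or after `b`. -/

open Set

lemma Monotone.apply_notMem_Ioo_of_covBy {ι α : Type*} [LinearOrder ι] [Preorder α]
    {f : ι → α} (hf : Monotone f) {a b : ι} (hab : a ⋖ b) (m : ι) :
    f m ∉ Ioo (f a) (f b) :=
  fun ⟨ham, hmb⟩ => hab.2 (hf.reflect_lt ham) (hf.reflect_lt hmb)

lemma Icc_subset_iUnion_Icc_iff_of_notMem_Ioo {α ι : Type*} [LinearOrder α] [DenselyOrdered α]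
    {a b : α} (hab : a ≤ b) {l0 l1 : ι → α}
    (h0 : ∀ j, l0 j ∉ Ioo a b) (h1 : ∀ j, l1 j ∉ Ioo a b) :
    Icc a b ⊆ ⋃ j, Icc (l0 j) (l1 j) ↔ ∃ j, l0 j ≤ a ∧ b ≤ l1 j := by
  refine ⟨fun hcov => ?_, fun ⟨j, hja, hjb⟩ =>
    (Icc_subset_Icc hja hjb).trans (subset_iUnion (fun j => Icc (l0 j) (l1 j)) j)⟩
  rcases hab.eq_or_lt with rfl | hlt
  · exact mem_iUnion.mp (hcov (left_mem_Icc.mpr le_rfl))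
  obtain ⟨c, hac, hcb⟩ := exists_between hlt
  obtain ⟨j, hj0c, hcj1⟩ := mem_iUnion.mp (hcov ⟨hac.le, hcb.le⟩)
  exact ⟨j, not_lt.mp fun ha => h0 j ⟨ha, hj0c.trans_lt hcb⟩,
    not_lt.mp fun hb => h1 j ⟨hac.trans_le hcj1, hb⟩⟩

theorem stmt_9 (p : ℕ) (l0 l1 : Fin p → ℝ)
    (Λ : Fin (2 * p) → ℝ) (hmono : Monotone Λ)
    (σ : Fin (2 * p) ≃ Fin p × Bool)
    (hperm : ∀ i, Λ i = if (σ i).2 then l1 (σ i).1 else l0 (σ i).1)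
    (i : ℕ) (hi : i + 1 < 2 * p) :
    Set.Icc (Λ ⟨i, by omega⟩) (Λ ⟨i + 1, hi⟩) ⊆ ⋃ j, Set.Icc (l0 j) (l1 j) ↔
      ∃ j, l0 j ≤ Λ ⟨i, by omega⟩ ∧ Λ ⟨i + 1, hi⟩ ≤ l1 j := by
  have hcov : (⟨i, by omega⟩ : Fin (2 * p)) ⋖ ⟨i + 1, hi⟩ :=
    Fin.covBy_iff.mpr (Order.covBy_add_one i)
  have hgap := hmono.apply_notMem_Ioo_of_covBy hcov
  refine Icc_subset_iUnion_Icc_iff_of_notMem_Ioo (hmono hcov.le) (fun j => ?_) (fun j => ?_)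
  · simpa [hperm] using hgap (σ.symm (j, false))
  · simpa [hperm] using hgap (σ.symm (j, true))
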